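/- arXiv:math/0501507 — 3 statements merged into one kernel-verified Lean document; each statement's English description precedes it below -/
import Mathlib

section
/- Let θ ∈ (0, π/2), λ = cot(θ/2), λ' = cot(π/4 − θ/2), and let φ : ℂ ∖ {i} → ℂ be the Möbius transformation φ(z) = (1 − i z)/(z − i). Then φ(iλ) = −iλ', φ(−iλ) = −i/λ', φ(i/λ) = iλ', and φ(−i/λ) = i/λ'. In particular, φ maps the set {iλ, −iλ, i/λ, −i/λ} bijectively onto the set {iλ', −iλ', i/λ', −i/λ'}. -/
/-!
Since `cot (π/4 - t) = (cot t + 1) / (cot t - 1)`, we have `λ' = (λ + 1) / (λ - 1)`, and the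
four values of `φ` become rational identities in `λ`, valid as soon as `λ ∉ {0, 1, -1}`, which
holds because `λ > 1`. The map `φ` is injective away from its pole `i`, so it carries the four
branch points of `Σ_θ` onto the four branch points of `Σ_{π/2-θ}`.
-/

open Real Complex

lemma cot_pi_div_four_sub {t : ℝ} (h : Real.sin t ≠ 0) :
    Real.cot (π / 4 - t) = (Real.cot t + 1) / (Real.cot t - 1) := by
  rw [Real.cot_eq_cos_div_sin, Real.cot_eq_cos_div_sin, Real.cos_sub, Real.sin_sub,
    Real.sin_pi_div_four, Real.cos_pi_div_four]
  rw [div_add_one h, div_sub_one h, div_div_div_cancel_right₀ h]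
  field_simp

lemma one_lt_cot {t : ℝ} (h0 : 0 < t) (h1 : t < π / 4) : 1 < Real.cot t := by
  rw [← inv_inv (Real.cot t), Real.cot_inv_eq_tan]
  refine one_lt_inv₀ ?_ |>.2 ?_
  · exact Real.tan_pos_of_pos_of_lt_pi_div_two h0 (by linarith [pi_pos])
  · rw [← Real.tan_pi_div_four]
    exact Real.tan_lt_tan_of_nonneg_of_lt_pi_div_two h0.le (by linarith [pi_pos]) h1

noncomputable def mobiusPhi (z : ℂ) : ℂ := (1 - I * z) / (z - I)

lemma mobiusPhi_injOn : Set.InjOn mobiusPhi {I}ᶜ := by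
  intro z hz w hw h
  rw [mobiusPhi, mobiusPhi, div_eq_div_iff (sub_ne_zero.2 hz) (sub_ne_zero.2 hw)] at h
  linear_combination (-(1:ℂ)/2) * h + (z - w) / 2 * I_sq

section

variable {A : ℂ}

lemma mobiusPhi_I_mul (hne1 : A ≠ 1) : mobiusPhi (I * A) = -(I * ((A + 1) / (A - 1))) := by
  have hsub1 : A - 1 ≠ 0 := sub_ne_zero.2 hne1
  unfold mobiusPhi
  field_simp
  linear_combination I_sq

lemma mobiusPhi_neg_I_mul (hneg1 : A ≠ -1) :
    mobiusPhi (-(I * A)) = -(I / ((A + 1) / (A - 1))) := by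
  have hadd1 : A + 1 ≠ 0 := by rwa [Ne, add_eq_zero_iff_eq_neg]
  have hden : -(I * A) - I ≠ 0 := by
    rw [← neg_add', neg_ne_zero, ← mul_add_one]
    exact mul_ne_zero I_ne_zero hadd1
  unfold mobiusPhi
  rw [div_eq_iff hden]
  field_simp
  linear_combination (1 + A) * I_sq

lemma mobiusPhi_I_div (hne0 : A ≠ 0) (hne1 : A ≠ 1) :
    mobiusPhi (I / A) = I * ((A + 1) / (A - 1)) := by
  have hsub1 : A - 1 ≠ 0 := sub_ne_zero.2 hne1
  unfold mobiusPhi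
  field_simp
  linear_combination (A ^ 2 - A) * I_sq

lemma mobiusPhi_neg_I_div (hne0 : A ≠ 0) (hneg1 : A ≠ -1) :
    mobiusPhi (-(I / A)) = I / ((A + 1) / (A - 1)) := by
  have hadd1 : A + 1 ≠ 0 := by rwa [Ne, add_eq_zero_iff_eq_neg]
  unfold mobiusPhi
  field_simp
  linear_combination (A ^ 2 + A) * I_sq

lemma mobiusPhi_bijOn (hne0 : A ≠ 0) (hne1 : A ≠ 1) (hneg1 : A ≠ -1) :
    Set.BijOn mobiusPhi {I * A, -(I * A), I / A, -(I / A)}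
      {I * ((A + 1) / (A - 1)), -(I * ((A + 1) / (A - 1))),
        I / ((A + 1) / (A - 1)), -(I / ((A + 1) / (A - 1)))} := by
  have hsub : {I * A, -(I * A), I / A, -(I / A)} ⊆ ({I}ᶜ : Set ℂ) := by
    simp only [Set.insert_subset_iff, Set.singleton_subset_iff, Set.mem_compl_singleton_iff]
    refine ⟨fun h => hne1 ?_, fun h => hneg1 ?_, fun h => hne1 ?_, fun h => hneg1 ?_⟩
    · exact mul_left_cancel₀ I_ne_zero (by linear_combination h)
    · exact mul_left_cancel₀ I_ne_zero (by linear_combination -h)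
    · field_simp at h
      exact h.symm
    · field_simp at h
      exact h.symm
  have himage : mobiusPhi '' {I * A, -(I * A), I / A, -(I / A)} =
      {I * ((A + 1) / (A - 1)), -(I * ((A + 1) / (A - 1))),
        I / ((A + 1) / (A - 1)), -(I / ((A + 1) / (A - 1)))} := by
    simp only [Set.image_insert_eq, Set.image_singleton, mobiusPhi_I_mul hne1,
      mobiusPhi_neg_I_mul hneg1, mobiusPhi_I_div hne0 hne1, mobiusPhi_neg_I_div hne0 hneg1]
    ext
    simp only [Set.mem_insert_iff, Set.mem_singleton_iff]
    tauto
  exact himage ▸ (mobiusPhi_injOn.mono hsub).bijOn_image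

end

/-- The Möbius transformation `φ(z) = (1 − iz)/(z − i)` maps the branch points
`±iλ, ±i/λ` of `Σ_θ` (with `λ = cot(θ/2)`) bijectively onto the branch points
`±iλ', ±i/λ'` of `Σ_{π/2−θ}` (with `λ' = cot(π/4 − θ/2)`). -/
theorem mobius_maps_branch_points
    (θ : ℝ) (hθ : θ ∈ Set.Ioo 0 (π / 2)) :
    let φ : ℂ → ℂ := fun z => (1 - I * z) / (z - I)
    let lam : ℂ := (Real.cot (θ / 2) : ℂ)
    let lam' : ℂ := (Real.cot (π / 4 - θ / 2) : ℂ)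
    φ (I * lam) = -(I * lam') ∧
    φ (-(I * lam)) = -(I / lam') ∧
    φ (I / lam) = I * lam' ∧
    φ (-(I / lam)) = I / lam' ∧
    Set.BijOn φ {I * lam, -(I * lam), I / lam, -(I / lam)}
      {I * lam', -(I * lam'), I / lam', -(I / lam')} := by
  intro φ lam lam'
  obtain ⟨hθ0, hθ1⟩ := hθ
  have hcot : 1 < Real.cot (θ / 2) := one_lt_cot (by linarith) (by linarith)
  have hsin : Real.sin (θ / 2) ≠ 0 :=
    (Real.sin_pos_of_pos_of_lt_pi (by linarith) (by linarith [pi_pos])).ne'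
  have hlam' : lam' = (lam + 1) / (lam - 1) := by
    simp only [lam', lam, cot_pi_div_four_sub hsin]
    push_cast
    rfl
  have hne0 : lam ≠ 0 := by
    simp only [lam]; exact_mod_cast (by linarith : Real.cot (θ / 2) ≠ 0)
  have hne1 : lam ≠ 1 := by
    simp only [lam]; exact_mod_cast hcot.ne'
  have hneg1 : lam ≠ -1 := by
    simp only [lam]; exact_mod_cast (by linarith : Real.cot (θ / 2) ≠ -1)
  rw [hlam']
  exact ⟨mobiusPhi_I_mul hne1, mobiusPhi_neg_I_mul hneg1, mobiusPhi_I_div hne0 hne1,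
    mobiusPhi_neg_I_div hne0 hneg1, mobiusPhi_bijOn hne0 hne1 hneg1⟩
end

section
/- Let θ ∈ (0, π/2) and let z ∈ ℂ with z ≠ i, and set φ(z) = (1 − i z)/(z − i). Then (z − i)⁴ · [ (φ(z)² − 1)² + 4·φ(z)²/cos²θ ] = −4·tan²θ · (z² + cot²(θ/2)) · (z² + tan²(θ/2)), where the real trigonometric values are regarded as complex numbers. -/
open Real Complex

/-- For `θ ∈ (0, π/2)` and `z ≠ i`, with `φ(z) = (1 − iz)/(z − i)`:
`(z − i)⁴·[(φ(z)² − 1)² + 4φ(z)²/cos²θ] = −4·tan²θ·(z² + cot²(θ/2))·(z² + tan²(θ/2))`. -/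
theorem mobius_pullback_quartic_identity
    (θ : ℝ) (hθ : θ ∈ Set.Ioo 0 (π / 2)) (z : ℂ) (hz : z ≠ I) :
    (z - I)^4 *
      ((((1 - I * z) / (z - I))^2 - 1)^2 +
        4 * ((1 - I * z) / (z - I))^2 / ((Real.cos θ : ℂ))^2) =
    -4 * ((Real.tan θ : ℂ))^2 *
      (z^2 + ((Real.cot (θ / 2) : ℂ))^2) * (z^2 + ((Real.tan (θ / 2) : ℂ))^2) := by
  obtain ⟨hθ0, hθ2⟩ := hθ
  have hpi := Real.pi_pos
  have hzi : z - I ≠ 0 := sub_ne_zero.mpr hz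
  have hh0 : 0 < θ / 2 := by linarith
  have hh2 : θ / 2 < π / 2 := by linarith
  have hccos : Real.cos (θ / 2) ≠ 0 :=
    (Real.cos_pos_of_mem_Ioo ⟨by linarith, hh2⟩).ne'
  have hcosθ_ne : Real.cos θ ≠ 0 :=
    (Real.cos_pos_of_mem_Ioo ⟨by linarith, hθ2⟩).ne'
  set t : ℝ := Real.tan (θ / 2) with htdef
  have ht0 : 0 < t := Real.tan_pos_of_pos_of_lt_pi_div_two hh0 hh2
  have ht1 : t < 1 := by
    have h4 : θ / 2 < π / 4 := by linarith
    have := Real.tan_lt_tan_of_nonneg_of_lt_pi_div_two hh0.le (by linarith) h4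
    rwa [Real.tan_pi_div_four] at this
  have h1p : (1 : ℝ) + t ^ 2 ≠ 0 := by positivity
  have h1m : (1 : ℝ) - t ^ 2 ≠ 0 := by nlinarith
  have hcot : Real.cot (θ / 2) = 1 / t := by
    rw [htdef, Real.tan_eq_sin_div_cos, one_div_div, Real.cot_eq_cos_div_sin]
  have hcos2 : (Real.cos (θ / 2)) ^ 2 = ((1 : ℝ) + t ^ 2)⁻¹ :=
    (Real.inv_one_add_tan_sq hccos).symm
  have hcosθ : Real.cos θ = (1 - t ^ 2) / (1 + t ^ 2) := by
    have h2 : Real.cos θ = 2 * ((1 : ℝ) + t ^ 2)⁻¹ - 1 := by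
      have hd := Real.cos_two_mul (θ / 2)
      rw [show 2 * (θ / 2) = θ by ring] at hd
      rw [hd, hcos2]
    rw [h2]; field_simp; ring
  have htanθ : Real.tan θ = 2 * t / (1 - t ^ 2) := by
    have hd := @Real.tan_two_mul (θ / 2)
    rw [show 2 * (θ / 2) = θ by ring] at hd
    rw [hd]
  -- complex algebraic identities using I² = -1
  have e1 : ((1 - I * z) / (z - I)) ^ 2 - 1 = 2 * (1 - z ^ 2) / (z - I) ^ 2 := by
    rw [div_pow, div_sub_one (pow_ne_zero 2 hzi)]
    have h1 : (1 - I * z) ^ 2 - (z - I) ^ 2 = 2 * (1 - z ^ 2) := by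
      linear_combination (z ^ 2 - 1) * Complex.I_sq
    rw [h1]
  have e2 : ((1 - I * z) / (z - I)) ^ 2 = -((1 + z ^ 2) ^ 2) / (z - I) ^ 4 := by
    rw [div_pow, div_eq_div_iff (pow_ne_zero 2 hzi) (pow_ne_zero 4 hzi)]
    linear_combination ((z - I) ^ 2 *
      ((I ^ 2 + 1) * z ^ 2 - 2 * I * z * (1 + z ^ 2) + (1 + z ^ 2) ^ 2)) * Complex.I_sq
  rw [e1, e2, htanθ, hcot, hcosθ]
  have ct0 : (t : ℂ) ≠ 0 := Complex.ofReal_ne_zero.mpr ht0.ne'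
  have c1p : (1 : ℂ) + (t : ℂ) ^ 2 ≠ 0 := by exact_mod_cast Complex.ofReal_ne_zero.mpr h1p
  have c1m : (1 : ℂ) - (t : ℂ) ^ 2 ≠ 0 := by exact_mod_cast Complex.ofReal_ne_zero.mpr h1m
  push_cast
  field_simp
  ring
end

section
/- For every ρ ∈ (0, 1], the 4×4 complex matrix M(ρ) whose rows are r₁ = (1/(ρ²+1))·(−1, −1, 0, 2πi), r₂ = (ρ²/(ρ²+1))·(1 − (ρ²+1)²/ρ⁴, −1, 0, 2πi), r₃ = (ρ²/(ρ²+1))·(1, 1, 2πi, 0), and r₄ = (((ρ²+1)² − 1)/(ρ²+1))·(1, 1/(1 − (ρ²+1)²), 2πi, 0), has nonzero determinant (is invertible). -/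
/-! Each row of the matrix is a scalar multiple of a row of
`!![a, b, 0, x; c, d, 0, x; f, g, y, 0; f, h, y, 0]`, whose determinant is
`x * y * (c - a) * (h - g)` (subtract the first row from the second and the third from the fourth).
Here `x = y = 2πi`, the row scalars are nonzero since `ρ ≠ 0`,
`c - a = (2ρ⁴ - (ρ² + 1)²) / ρ⁴` and `h - g = (ρ² + 1)² / (1 - (ρ² + 1)²)`;
finally `(ρ² + 1)² - 2ρ⁴ = 1 + 2ρ² - ρ⁴ > 0` as soon as `ρ² ≤ 1`. -/

open Real Complex

section Determinant

variable {R : Type*} [CommRing R]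

theorem Matrix.det_fin_four_of_paired_rows (a b c d f g h x y : R) :
    Matrix.det !![a, b, 0, x; c, d, 0, x; f, g, y, 0; f, h, y, 0] =
      x * y * (c - a) * (h - g) := by
  rw [Matrix.det_succ_row_zero]
  simp [Fin.sum_univ_succ, Matrix.det_fin_three, Matrix.submatrix_apply, Fin.succAbove]
  ring

theorem Matrix.det_fin_four_of_scaled_paired_rows (k₁ k₂ k₃ k₄ a b c d f g h x y : R) :
    Matrix.det !![k₁ * a, k₁ * b, k₁ * 0, k₁ * x; k₂ * c, k₂ * d, k₂ * 0, k₂ * x;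
      k₃ * f, k₃ * g, k₃ * y, k₃ * 0; k₄ * f, k₄ * h, k₄ * y, k₄ * 0] =
      k₁ * k₂ * k₃ * k₄ * (x * y * (c - a) * (h - g)) := by
  rw [← Matrix.det_fin_four_of_paired_rows a b c d f g h x y,
    show k₁ * k₂ * k₃ * k₄ = ∏ i, ![k₁, k₂, k₃, k₄] i by simp [Fin.prod_univ_four],
    ← Matrix.det_mul_column]
  congr 1
  ext i j
  fin_cases i <;> fin_cases j <;> rfl

end Determinant

lemma one_lt_sq_add_one_sq {ρ : ℝ} (hρ : ρ ≠ 0) : 1 < (ρ ^ 2 + 1) ^ 2 := by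
  have : 0 < ρ ^ 2 := by positivity
  nlinarith

lemma two_mul_pow_four_lt_sq_add_one_sq {ρ : ℝ} (hρ : ρ ^ 2 ≤ 1) :
    2 * ρ ^ 4 < (ρ ^ 2 + 1) ^ 2 := by
  nlinarith [sq_nonneg ρ]

/-- The 4×4 block of the differential of the modified ligature map `L̂` at the
singly periodic Scherk boundary point `S_ρ` is invertible, for every `ρ ∈ (0, 1]`. -/
theorem scherk_jacobian_block_invertible
    (ρ : ℝ) (hρ : ρ ∈ Set.Ioc (0:ℝ) 1) :
    (Matrix.det (!![
      (1 / ((ρ:ℂ)^2 + 1)) * (-1), (1 / ((ρ:ℂ)^2 + 1)) * (-1),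
        (1 / ((ρ:ℂ)^2 + 1)) * 0, (1 / ((ρ:ℂ)^2 + 1)) * (2 * π * I);
      ((ρ:ℂ)^2 / ((ρ:ℂ)^2 + 1)) * (1 - ((ρ:ℂ)^2 + 1)^2 / (ρ:ℂ)^4),
        ((ρ:ℂ)^2 / ((ρ:ℂ)^2 + 1)) * (-1),
        ((ρ:ℂ)^2 / ((ρ:ℂ)^2 + 1)) * 0, ((ρ:ℂ)^2 / ((ρ:ℂ)^2 + 1)) * (2 * π * I);
      ((ρ:ℂ)^2 / ((ρ:ℂ)^2 + 1)) * 1, ((ρ:ℂ)^2 / ((ρ:ℂ)^2 + 1)) * 1,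
        ((ρ:ℂ)^2 / ((ρ:ℂ)^2 + 1)) * (2 * π * I), ((ρ:ℂ)^2 / ((ρ:ℂ)^2 + 1)) * 0;
      ((((ρ:ℂ)^2 + 1)^2 - 1) / ((ρ:ℂ)^2 + 1)) * 1,
        ((((ρ:ℂ)^2 + 1)^2 - 1) / ((ρ:ℂ)^2 + 1)) * (1 / (1 - ((ρ:ℂ)^2 + 1)^2)),
        ((((ρ:ℂ)^2 + 1)^2 - 1) / ((ρ:ℂ)^2 + 1)) * (2 * π * I),
        ((((ρ:ℂ)^2 + 1)^2 - 1) / ((ρ:ℂ)^2 + 1)) * 0] : Matrix (Fin 4) (Fin 4) ℂ)) ≠ 0 := by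
  obtain ⟨hρ0, hρ1⟩ := hρ
  have hρ : (ρ : ℂ) ≠ 0 := by exact_mod_cast hρ0.ne'
  have hs : (ρ : ℂ) ^ 2 + 1 ≠ 0 := by exact_mod_cast (by positivity : ρ ^ 2 + 1 ≠ 0)
  have hs1 : ((ρ : ℂ) ^ 2 + 1) ^ 2 ≠ 1 := by exact_mod_cast (one_lt_sq_add_one_sq hρ0.ne').ne'
  have hs2 : 2 * (ρ : ℂ) ^ 4 ≠ ((ρ : ℂ) ^ 2 + 1) ^ 2 := by
    exact_mod_cast (two_mul_pow_four_lt_sq_add_one_sq (pow_le_one₀ hρ0.le hρ1)).ne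
  have hc : 1 - ((ρ : ℂ) ^ 2 + 1) ^ 2 / (ρ : ℂ) ^ 4 - -1 =
      (2 * (ρ : ℂ) ^ 4 - ((ρ : ℂ) ^ 2 + 1) ^ 2) / (ρ : ℂ) ^ 4 := by
    field_simp
    ring
  have hh : 1 / (1 - ((ρ : ℂ) ^ 2 + 1) ^ 2) - 1 =
      ((ρ : ℂ) ^ 2 + 1) ^ 2 / (1 - ((ρ : ℂ) ^ 2 + 1) ^ 2) := by
    rw [div_sub_one (sub_ne_zero.2 hs1.symm)]
    ring
  rw [Matrix.det_fin_four_of_scaled_paired_rows, hc, hh]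
  simp [hρ, hs, hs1, hs1.symm, hs2, sub_eq_zero, pi_ne_zero, I_ne_zero]
end
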